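/- arXiv:2308.16233 — 4 statements merged into one kernel-verified Lean document; each statement's English description precedes it below -/
import Mathlib

section
/- For any integer ℓ ≥ 0 and real x ≥ 0, the function F_ℓ(x) := x·g(ℓ,x) − ℓ·g(ℓ+1,x), where g(ℓ,x) is the regularized lower incomplete gamma function g(ℓ,x) = (1/(ℓ-1)!)∫₀ˣ t^{ℓ-1} e^{-t} dt (with g(0,x)=1), satisfies 0 ≤ F_ℓ(x) ≤ x. -/
/-!
Since `0 ≤ g(ℓ, x) ≤ 1` (the partial integral is at most `Γ(ℓ) = (ℓ-1)!`), `F_ℓ(x) ≤ x · g(ℓ, x) ≤ x`.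
For the lower bound, `ℓ · g(ℓ+1, x) = (1/(ℓ-1)!) ∫₀ˣ t · t^(ℓ-1) e^{-t} dt`, and bounding the
factor `t` by `x` on `[0, x]` gives `ℓ · g(ℓ+1, x) ≤ x · g(ℓ, x)`.
-/

/-- Regularized lower incomplete gamma function for natural `ℓ`:
`g ℓ x = (1/(ℓ-1)!) ∫₀ˣ t^(ℓ-1) e^{-t} dt` for `ℓ ≥ 1`, with `g 0 x = 1`. -/
noncomputable def regIncGamma (ℓ : ℕ) (x : ℝ) : ℝ :=
  if ℓ = 0 then 1
  else (1 / (Nat.factorial (ℓ - 1) : ℝ)) * ∫ t in (0:ℝ)..x, t ^ (ℓ - 1) * Real.exp (-t)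

/-- `F_ℓ(x) = x·g(ℓ,x) − ℓ·g(ℓ+1,x)`. -/
noncomputable def Fgam (ℓ : ℕ) (x : ℝ) : ℝ :=
  x * regIncGamma ℓ x - (ℓ : ℝ) * regIncGamma (ℓ + 1) x

open MeasureTheory Set Real Nat

lemma integrableOn_pow_mul_exp_neg_Ioi (n : ℕ) :
    IntegrableOn (fun t : ℝ ↦ t ^ n * exp (-t)) (Ioi 0) := by
  refine (GammaIntegral_convergent (s := n + 1) (by positivity)).congr_fun (fun t _ ↦ ?_)
    measurableSet_Ioi
  simp [mul_comm]

lemma integral_pow_mul_exp_neg_Ioi (n : ℕ) : ∫ t in Ioi 0, t ^ n * exp (-t) = n ! := by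
  rw [← Gamma_nat_eq_factorial, Gamma_eq_integral (by positivity)]
  refine setIntegral_congr_fun measurableSet_Ioi fun t _ ↦ ?_
  simp [mul_comm]

lemma integral_pow_mul_exp_neg_nonneg (n : ℕ) {x : ℝ} (hx : 0 ≤ x) :
    0 ≤ ∫ t in (0:ℝ)..x, t ^ n * exp (-t) :=
  intervalIntegral.integral_nonneg hx fun t ht ↦ by have := ht.1; positivity

lemma integral_pow_mul_exp_neg_le_factorial (n : ℕ) {x : ℝ} (hx : 0 ≤ x) :
    ∫ t in (0:ℝ)..x, t ^ n * exp (-t) ≤ n ! := by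
  rw [intervalIntegral.integral_of_le hx, ← integral_pow_mul_exp_neg_Ioi]
  refine setIntegral_mono_set (integrableOn_pow_mul_exp_neg_Ioi n) ?_
    Ioc_subset_Ioi_self.eventuallyLE
  filter_upwards [self_mem_ae_restrict measurableSet_Ioi] with t ht
  have := ht.out.le
  positivity

lemma integral_pow_succ_mul_exp_neg_le (n : ℕ) {x : ℝ} (hx : 0 ≤ x) :
    ∫ t in (0:ℝ)..x, t ^ (n + 1) * exp (-t) ≤ x * ∫ t in (0:ℝ)..x, t ^ n * exp (-t) := by
  have hcont (k : ℕ) : Continuous fun t : ℝ ↦ t ^ k * exp (-t) := by fun_prop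
  rw [← intervalIntegral.integral_const_mul]
  refine intervalIntegral.integral_mono_on hx ((hcont _).intervalIntegrable _ _)
    (((hcont _).const_mul x).intervalIntegrable _ _) fun t ⟨ht₀, htx⟩ ↦ ?_
  rw [pow_succ, mul_comm (t ^ n) t, mul_assoc]
  exact mul_le_mul_of_nonneg_right htx (by positivity)

lemma regIncGamma_zero (x : ℝ) : regIncGamma 0 x = 1 := rfl

lemma regIncGamma_succ (n : ℕ) (x : ℝ) :
    regIncGamma (n + 1) x = (∫ t in (0:ℝ)..x, t ^ n * exp (-t)) / n ! := by
  simp [regIncGamma, div_eq_inv_mul]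

lemma regIncGamma_nonneg (ℓ : ℕ) {x : ℝ} (hx : 0 ≤ x) : 0 ≤ regIncGamma ℓ x := by
  cases ℓ with
  | zero => simp [regIncGamma_zero]
  | succ n =>
    rw [regIncGamma_succ]
    exact div_nonneg (integral_pow_mul_exp_neg_nonneg n hx) (by positivity)

lemma regIncGamma_le_one (ℓ : ℕ) {x : ℝ} (hx : 0 ≤ x) : regIncGamma ℓ x ≤ 1 := by
  cases ℓ with
  | zero => simp [regIncGamma_zero]
  | succ n =>
    rw [regIncGamma_succ, div_le_one (by positivity)]
    exact integral_pow_mul_exp_neg_le_factorial n hx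

lemma natCast_mul_regIncGamma_succ_le (ℓ : ℕ) {x : ℝ} (hx : 0 ≤ x) :
    ℓ * regIncGamma (ℓ + 1) x ≤ x * regIncGamma ℓ x := by
  cases ℓ with
  | zero => simpa [regIncGamma_zero] using hx
  | succ n =>
    have hfact : ((n + 1 : ℕ) : ℝ) / (n + 1)! = 1 / n ! := by
      rw [factorial_succ, cast_mul, div_mul_cancel_left₀ (by positivity), one_div]
    calc ((n + 1 : ℕ) : ℝ) * regIncGamma (n + 1 + 1) x
        = (∫ t in (0:ℝ)..x, t ^ (n + 1) * exp (-t)) / n ! := by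
          rw [regIncGamma_succ, mul_div_left_comm, hfact, mul_one_div]
      _ ≤ (x * ∫ t in (0:ℝ)..x, t ^ n * exp (-t)) / n ! := by
          gcongr
          exact integral_pow_succ_mul_exp_neg_le n hx
      _ = x * regIncGamma (n + 1) x := by rw [regIncGamma_succ, mul_div_assoc]

/-- For `ℓ ≥ 0` and `x ≥ 0`, `0 ≤ F_ℓ(x) ≤ x`. -/
theorem Fgam_nonneg_le (ℓ : ℕ) (x : ℝ) (hx : 0 ≤ x) :
    0 ≤ Fgam ℓ x ∧ Fgam ℓ x ≤ x := by
  unfold Fgam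
  have hlower := natCast_mul_regIncGamma_succ_le ℓ hx
  have hxg : x * regIncGamma ℓ x ≤ x := mul_le_of_le_one_right hx (regIncGamma_le_one ℓ hx)
  have hℓg : 0 ≤ (ℓ : ℝ) * regIncGamma (ℓ + 1) x := by
    have := regIncGamma_nonneg (ℓ + 1) hx
    positivity
  constructor <;> linarith
end

section
/- For any integer ℓ ≥ 0, F_ℓ(x) ~ x^{ℓ+1}/(ℓ+1)! as x → 0⁺; more precisely, the limit of F_ℓ(x)/x^{ℓ+1} as x → 0⁺ equals 1/(ℓ+1)!. -/
open Filter Real intervalIntegral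

section PowMulExpNeg

variable (k : ℕ) {x : ℝ}

theorem integral_pow_mul_exp_neg_le (hx : 0 ≤ x) :
    ∫ t in (0:ℝ)..x, t ^ k * exp (-t) ≤ x ^ (k + 1) / (k + 1) := by
  calc ∫ t in (0:ℝ)..x, t ^ k * exp (-t)
      ≤ ∫ t in (0:ℝ)..x, t ^ k := by
        refine integral_mono_on hx
          ((by fun_prop : Continuous _).intervalIntegrable _ _)
          ((by fun_prop : Continuous _).intervalIntegrable _ _) fun t ht => ?_
        exact mul_le_of_le_one_right (pow_nonneg ht.1 k) (exp_le_one_iff.2 (neg_nonpos.2 ht.1))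
    _ = x ^ (k + 1) / (k + 1) := by simp [integral_pow]

theorem exp_neg_mul_le_integral_pow_mul_exp_neg (hx : 0 ≤ x) :
    exp (-x) * x ^ (k + 1) / (k + 1) ≤ ∫ t in (0:ℝ)..x, t ^ k * exp (-t) := by
  calc exp (-x) * x ^ (k + 1) / (k + 1)
      = ∫ t in (0:ℝ)..x, t ^ k * exp (-x) := by
        rw [integral_mul_const, integral_pow]; ring
    _ ≤ ∫ t in (0:ℝ)..x, t ^ k * exp (-t) := by
        refine integral_mono_on hx
          ((by fun_prop : Continuous _).intervalIntegrable _ _)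
          ((by fun_prop : Continuous _).intervalIntegrable _ _) fun t ht => ?_
        exact mul_le_mul_of_nonneg_left (exp_le_exp.2 (neg_le_neg ht.2)) (pow_nonneg ht.1 k)

theorem tendsto_integral_pow_mul_exp_neg_div_pow :
    Tendsto (fun x : ℝ => (∫ t in (0:ℝ)..x, t ^ k * exp (-t)) / x ^ (k + 1))
      (nhdsWithin 0 (Set.Ioi 0)) (nhds (1 / (k + 1))) := by
  have hk : (0:ℝ) < k + 1 := by positivity
  have lower : Tendsto (fun x : ℝ => exp (-x) / (k + 1)) (nhdsWithin 0 (Set.Ioi 0))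
      (nhds (1 / (k + 1))) := by
    have := ((continuous_exp.comp continuous_neg).div_const ((k:ℝ) + 1)).tendsto 0
    simpa using this.mono_left nhdsWithin_le_nhds
  refine tendsto_of_tendsto_of_tendsto_of_le_of_le' lower tendsto_const_nhds ?_ ?_ <;>
    filter_upwards [self_mem_nhdsWithin] with x (hx : 0 < x)
  · rw [div_le_div_iff₀ hk (by positivity)]
    rw [← div_le_iff₀ hk]
    exact exp_neg_mul_le_integral_pow_mul_exp_neg k hx.le
  · rw [div_le_div_iff₀ (by positivity) hk]
    rw [one_mul, ← le_div_iff₀ hk]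
    exact integral_pow_mul_exp_neg_le k hx.le

end PowMulExpNeg

theorem Fgam_zero (x : ℝ) : Fgam 0 x = x := by
  simp [Fgam, regIncGamma]

theorem Fgam_succ (m : ℕ) (x : ℝ) :
    Fgam (m + 1) x = (x * (∫ t in (0:ℝ)..x, t ^ m * exp (-t))
      - ∫ t in (0:ℝ)..x, t ^ (m + 1) * exp (-t)) / m.factorial := by
  simp only [Fgam, regIncGamma, Nat.succ_ne_zero, if_false, Nat.add_sub_cancel, Nat.factorial_succ]
  push_cast
  field_simp

/-- As `x → 0⁺`, `F_ℓ(x)/x^{ℓ+1} → 1/(ℓ+1)!`, i.e. `F_ℓ(x) ~ x^{ℓ+1}/(ℓ+1)!`. -/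
theorem Fgam_asymptotic_zero (ℓ : ℕ) :
    Filter.Tendsto (fun x : ℝ => Fgam ℓ x / x ^ (ℓ + 1))
      (nhdsWithin 0 (Set.Ioi 0)) (nhds (1 / (Nat.factorial (ℓ + 1) : ℝ))) := by
  rcases ℓ with _ | m
  · refine tendsto_const_nhds.congr' ?_
    filter_upwards [self_mem_nhdsWithin] with x (hx : 0 < x)
    simp [Fgam_zero, hx.ne']
  · have hlim := ((tendsto_integral_pow_mul_exp_neg_div_pow m).sub
      (tendsto_integral_pow_mul_exp_neg_div_pow (m + 1))).div_const (m.factorial : ℝ)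
    have hval : (1 / ((m:ℝ) + 1) - 1 / ((m + 1 : ℕ) + 1)) / m.factorial
        = 1 / (m + 1 + 1).factorial := by
      simp only [Nat.factorial_succ]
      push_cast
      field_simp
      ring
    rw [← hval]
    refine hlim.congr' ?_
    filter_upwards [self_mem_nhdsWithin] with x (hx : 0 < x)
    rw [Fgam_succ, pow_succ x (m + 1)]
    field_simp
end

section
/- Let p₀, p₁ ≥ 0 with p₀ + p₁ = 1, let h, k ≥ 1 be integers. Let {a_h} be the set of binary sequences (a₁,…,a_k) ∈ {0,1}^k containing no run of more than h consecutive 1's at any position, where in addition the final (unterminated) run of 1's is also required to have length at most h. Then (1 − p₁^{h+1})^k ≤ Σ over sequences in {a_h} of p_{a₁}p_{a₂}⋯p_{a_k}. -/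
/-!
Condition on the length `r` of the run of ones carried in from the left: with
`F r k = faithfulWeight p₀ p₁ h r k` the weight of the length-`k` words `a` such that `1^r a` is
`h`-faithful (`FaithfulAfter h r a`), splitting off the first letter
gives `F r (k + 1) ≥ p₀ F 0 k + p₁ F (r + 1) k` for `r ≤ h`. Induction on `k` then yields
`F r (k + 1) ≥ (1 - p₁^(h+1-r)) (1 - p₁^(h+1))^k` for every `r ≤ h`, and `r = 0` is the theorem.
-/

/-- Extension of a finite binary sequence `a : Fin k → Bool` to `ℕ`, padding with `false`. -/
def extSeq {k : ℕ} (a : Fin k → Bool) (i : ℕ) : Bool :=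
  if hi : i < k then a ⟨i, hi⟩ else false

/-- A sequence is `h`-faithful if it contains no run of more than `h` consecutive `true`s,
including the final (unterminated) run: every window of length `h+1` contains a `false`. -/
def HFaithful (h : ℕ) {k : ℕ} (a : Fin k → Bool) : Prop :=
  ∀ s : ℕ, ∃ j ≤ h, extSeq a (s + j) = false

open scoped Classical
open Finset

def runExt (r : ℕ) {k : ℕ} (a : Fin k → Bool) (n : ℕ) : Bool :=
  if n < r then true else extSeq a (n - r)

def FaithfulAfter (h r : ℕ) {k : ℕ} (a : Fin k → Bool) : Prop :=
  ∀ s : ℕ, ∃ j ≤ h, runExt r a (s + j) = false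

lemma faithfulAfter_zero_iff {h k : ℕ} (a : Fin k → Bool) :
    FaithfulAfter h 0 a ↔ HFaithful h a := by
  simp [FaithfulAfter, HFaithful, runExt]

lemma extSeq_cons_zero {k : ℕ} (b : Bool) (t : Fin k → Bool) :
    extSeq (Fin.cons b t : Fin (k + 1) → Bool) 0 = b := by
  simp [extSeq]

lemma extSeq_cons_succ {k : ℕ} (b : Bool) (t : Fin k → Bool) (n : ℕ) :
    extSeq (Fin.cons b t : Fin (k + 1) → Bool) (n + 1) = extSeq t n := by
  by_cases hn : n < k
  · simp only [extSeq, hn, Nat.add_lt_add_iff_right, dif_pos]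
    exact Fin.cons_succ (α := fun _ => Bool) b t ⟨n, hn⟩
  · simp [extSeq, hn]

lemma faithfulAfter_cons_true {h r k : ℕ} (t : Fin k → Bool) :
    FaithfulAfter h r (Fin.cons true t : Fin (k + 1) → Bool) ↔ FaithfulAfter h (r + 1) t := by
  suffices runExt r (Fin.cons true t : Fin (k + 1) → Bool) = runExt (r + 1) t by
    rw [FaithfulAfter, this, FaithfulAfter]
  funext n
  rcases lt_trichotomy n r with hn | rfl | hn
  · simp [runExt, hn, Nat.lt_succ_of_lt hn]
  · simp [runExt, extSeq_cons_zero]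
  · obtain ⟨m, rfl⟩ := Nat.exists_eq_add_of_lt hn
    simp only [runExt, show ¬ r + m + 1 < r by omega, show ¬ r + m + 1 < r + 1 by omega,
      if_false, show r + m + 1 - r = m + 1 by omega, show r + m + 1 - (r + 1) = m by omega,
      extSeq_cons_succ]

lemma FaithfulAfter.cons_false {h r k : ℕ} {t : Fin k → Bool} (ht : FaithfulAfter h 0 t)
    (hr : r ≤ h) : FaithfulAfter h r (Fin.cons false t : Fin (k + 1) → Bool) := by
  intro s
  by_cases hs : s ≤ r
  · refine ⟨r - s, by omega, ?_⟩
    simp [runExt, show s + (r - s) = r by omega, extSeq_cons_zero]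
  · obtain ⟨j, hj, htj⟩ := ht (s - (r + 1))
    refine ⟨j, hj, ?_⟩
    simp only [runExt, not_lt_zero, if_false, Nat.sub_zero] at htj
    simp only [runExt, show ¬ s + j < r by omega, if_false,
      show s + j - r = s - (r + 1) + j + 1 by omega, extSeq_cons_succ, htj]

def bernoulliWeight (p₀ p₁ : ℝ) {k : ℕ} (a : Fin k → Bool) : ℝ :=
  ∏ i, if a i then p₁ else p₀

lemma bernoulliWeight_cons (p₀ p₁ : ℝ) {k : ℕ} (b : Bool) (t : Fin k → Bool) :
    bernoulliWeight p₀ p₁ (Fin.cons b t : Fin (k + 1) → Bool) =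
      (if b then p₁ else p₀) * bernoulliWeight p₀ p₁ t := by
  simp [bernoulliWeight, Fin.prod_univ_succ]

lemma bernoulliWeight_nonneg {p₀ p₁ : ℝ} (hp₀ : 0 ≤ p₀) (hp₁ : 0 ≤ p₁) {k : ℕ}
    (a : Fin k → Bool) : 0 ≤ bernoulliWeight p₀ p₁ a :=
  prod_nonneg fun i _ => by split <;> assumption

noncomputable def faithfulWeight (p₀ p₁ : ℝ) (h r k : ℕ) : ℝ :=
  ∑ a ∈ univ.filter (fun a : Fin k → Bool => FaithfulAfter h r a), bernoulliWeight p₀ p₁ a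

section

variable {p₀ p₁ : ℝ} {h : ℕ}

lemma faithfulWeight_nonneg (hp₀ : 0 ≤ p₀) (hp₁ : 0 ≤ p₁) (r k : ℕ) :
    0 ≤ faithfulWeight p₀ p₁ h r k :=
  sum_nonneg fun a _ => bernoulliWeight_nonneg hp₀ hp₁ a

lemma faithfulWeight_zero {r : ℕ} (hr : r ≤ h) : faithfulWeight p₀ p₁ h r 0 = 1 := by
  have hall (a : Fin 0 → Bool) : FaithfulAfter h r a := by
    intro s
    by_cases hs : s ≤ r
    · exact ⟨r - s, by omega, by simp [runExt, extSeq, show s + (r - s) = r by omega]⟩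
    · exact ⟨0, h.zero_le, by simp [runExt, extSeq, show ¬ s < r by omega]⟩
  simp [faithfulWeight, filter_true_of_mem fun a _ => hall a, bernoulliWeight]

lemma le_faithfulWeight_succ (hp₀ : 0 ≤ p₀) (hp₁ : 0 ≤ p₁) {r : ℕ} (hr : r ≤ h) (k : ℕ) :
    p₀ * faithfulWeight p₀ p₁ h 0 k + p₁ * faithfulWeight p₀ p₁ h (r + 1) k ≤
      faithfulWeight p₀ p₁ h r (k + 1) := by
  have hsplit : faithfulWeight p₀ p₁ h r (k + 1) =
      p₀ * ∑ t ∈ univ.filter (fun t : Fin k → Bool =>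
          FaithfulAfter h r (Fin.cons false t : Fin (k + 1) → Bool)), bernoulliWeight p₀ p₁ t +
        p₁ * faithfulWeight p₀ p₁ h (r + 1) k := by
    simp only [faithfulWeight, sum_filter, mul_sum]
    rw [← (Fin.consEquiv fun _ => Bool).sum_comp, Fintype.sum_prod_type, Fintype.sum_bool]
    simp [Fin.consEquiv, bernoulliWeight_cons, faithfulAfter_cons_true, mul_ite, add_comm]
  rw [hsplit]
  gcongr ?_ + _
  exact mul_le_mul_of_nonneg_left (sum_le_sum_of_subset_of_nonneg
    (fun t => by simpa using fun ht : FaithfulAfter h 0 t => ht.cons_false hr)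
    fun t _ _ => bernoulliWeight_nonneg hp₀ hp₁ t) hp₀

lemma one_sub_pow_le_faithfulWeight_one (hp₀ : 0 ≤ p₀) (hp₁ : 0 ≤ p₁) (hsum : p₀ + p₁ = 1)
    {r : ℕ} (hr : r ≤ h) : 1 - p₁ ^ (h + 1 - r) ≤ faithfulWeight p₀ p₁ h r 1 := by
  refine le_trans ?_ (le_faithfulWeight_succ hp₀ hp₁ hr 0)
  rw [faithfulWeight_zero h.zero_le, mul_one]
  rcases hr.lt_or_eq with hr | hr
  · rw [faithfulWeight_zero hr]
    linarith [pow_nonneg hp₁ (h + 1 - r)]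
  · subst r
    rw [Nat.add_sub_cancel_left, pow_one]
    linarith [mul_nonneg hp₁ (faithfulWeight_nonneg (h := h) hp₀ hp₁ (h + 1) 0)]

lemma one_sub_pow_mul_le_faithfulWeight (hp₀ : 0 ≤ p₀) (hp₁ : 0 ≤ p₁) (hsum : p₀ + p₁ = 1)
    (k : ℕ) : ∀ r ≤ h, (1 - p₁ ^ (h + 1 - r)) * (1 - p₁ ^ (h + 1)) ^ k ≤
      faithfulWeight p₀ p₁ h r (k + 1) := by
  set q := p₁ ^ (h + 1)
  have hq : 0 ≤ q := pow_nonneg hp₁ _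
  have hq_le : q ≤ 1 := pow_le_one₀ hp₁ (by linarith)
  induction k with
  | zero =>
    intro r hr
    simpa using one_sub_pow_le_faithfulWeight_one hp₀ hp₁ hsum hr
  | succ k ih =>
    intro r hr
    have hnext : (1 - p₁ ^ (h - r)) * (1 - q) ^ k ≤ faithfulWeight p₀ p₁ h (r + 1) (k + 1) := by
      rcases hr.lt_or_eq with hr | hr
      · simpa [show h + 1 - (r + 1) = h - r by omega] using ih (r + 1) hr
      · subst r
        simpa using faithfulWeight_nonneg hp₀ hp₁ _ _
    -- with `x = p₁ ^ (h + 1 - r) ≤ p₁`, the slack is `(1 - q) ^ k * q * (p₁ - x) ≥ 0`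
    have hslack : (1 - p₁ ^ (h + 1 - r)) * (1 - q) ^ (k + 1) ≤
        p₀ * ((1 - q) * (1 - q) ^ k) + p₁ * ((1 - p₁ ^ (h - r)) * (1 - q) ^ k) := by
      have hx : p₁ ^ (h + 1 - r) = p₁ * p₁ ^ (h - r) := by
        rw [← pow_succ', show h - r + 1 = h + 1 - r by omega]
      have hx_le : p₁ ^ (h + 1 - r) ≤ p₁ := pow_le_of_le_one hp₁ (by linarith) (by omega)
      have hk : 0 ≤ (1 - q) ^ k * q * (p₁ - p₁ ^ (h + 1 - r)) :=
        mul_nonneg (mul_nonneg (pow_nonneg (by linarith) _) hq) (by linarith)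
      rw [show p₀ = 1 - p₁ by linarith, pow_succ]
      rw [hx] at hk ⊢
      linear_combination hk
    calc _ ≤ p₀ * ((1 - q) * (1 - q) ^ k) + p₁ * ((1 - p₁ ^ (h - r)) * (1 - q) ^ k) := hslack
      _ ≤ p₀ * faithfulWeight p₀ p₁ h 0 (k + 1) + p₁ * faithfulWeight p₀ p₁ h (r + 1) (k + 1) := by
          gcongr
          simpa using ih 0 h.zero_le
      _ ≤ faithfulWeight p₀ p₁ h r (k + 1 + 1) := le_faithfulWeight_succ hp₀ hp₁ hr (k + 1)

end

open scoped Classical in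
theorem faithful_prob_lower_bound_general (p₀ p₁ : ℝ) (hp₀ : 0 ≤ p₀) (hp₁ : 0 ≤ p₁)
    (hsum : p₀ + p₁ = 1) (h k : ℕ) (hk : 1 ≤ k) :
    (1 - p₁ ^ (h + 1)) ^ k ≤
      ∑ a ∈ Finset.univ.filter (fun a : Fin k → Bool => HFaithful h a),
        ∏ i, (if a i then p₁ else p₀) := by
  obtain ⟨k, rfl⟩ := Nat.exists_eq_add_of_le' hk
  simpa [faithfulWeight, bernoulliWeight, faithfulAfter_zero_iff, pow_succ'] using
    one_sub_pow_mul_le_faithfulWeight hp₀ hp₁ hsum k 0 h.zero_le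

open scoped Classical in
/-- The total i.i.d. Bernoulli probability of `h`-faithful binary sequences of length `k`
is at least `(1 − p₁^{h+1})^k`. -/
theorem faithful_prob_lower_bound (p₀ p₁ : ℝ) (hp₀ : 0 ≤ p₀) (hp₁ : 0 ≤ p₁)
    (hsum : p₀ + p₁ = 1) (h k : ℕ) (hh : 1 ≤ h) (hk : 1 ≤ k) :
    (1 - p₁ ^ (h + 1)) ^ k ≤
      ∑ a ∈ Finset.univ.filter (fun a : Fin k → Bool => HFaithful h a),
        ∏ i, (if a i then p₁ else p₀) :=
  faithful_prob_lower_bound_general p₀ p₁ hp₀ hp₁ hsum h k hk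
end

section
/- Poisson trajectory decomposition: let E₀,…,E_N be linear maps on a finite-dimensional space, p₀,…,p_N ≥ 0 with Σp_μ = 1, and γ > 0. Define L = γ(Σ_μ p_μ E_μ − I). Then exp(Lt) = Σ_{k=0}^∞ Σ_{(μ₁,…,μ_k)} [(γt)^k e^{-γt}/k!] p_{μ₁}⋯p_{μ_k} E_{μ_k}∘⋯∘E_{μ₁}, and the coefficients (γt)^k e^{-γt} p_{μ₁}⋯p_{μ_k}/k! are nonnegative and sum to 1 over all finite sequences. -/
/-! With `c = γ t` and `A = Σ_μ p_μ E_μ`, the generator is `c (A - 1)`. As `1` is central,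
`exp (c (A - 1)) = e^{-c} exp (c A) = Σ_k e^{-c} c^k / k! • A^k`, and expanding the noncommutative
power `A^k` gives one term per trajectory of length `k`. Summing the weights over trajectories of
length `k` leaves `(Σ_μ p_μ)^k = 1` times the Poisson weight, and the Poisson weights sum to `1`. -/

open scoped BigOperators

noncomputable section

variable {n N : ℕ}

/-- Composition `E_{μ_k} ∘ ⋯ ∘ E_{μ₁}` of maps along a trajectory `(μ₁,…,μ_k)`. -/
def trajComp (E : Fin (N + 1) → (EuclideanSpace ℂ (Fin n) →L[ℂ] EuclideanSpace ℂ (Fin n)))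
    {k : ℕ} (μs : Fin k → Fin (N + 1)) :
    EuclideanSpace ℂ (Fin n) →L[ℂ] EuclideanSpace ℂ (Fin n) :=
  (List.ofFn fun i => E (μs i)).foldl (fun acc f => f.comp acc) (ContinuousLinearMap.id ℂ _)

open NormedSpace Nat

theorem List.foldl_mul_left_eq_prod_reverse_mul {M : Type*} [Monoid M] (l : List M) (b : M) :
    l.foldl (fun acc f => f * acc) b = l.reverse.prod * b := by
  induction l generalizing b with
  | nil => simp
  | cons a l ih => simp [ih, mul_assoc]

theorem trajComp_eq_prod_reverse
    (E : Fin (N + 1) → (EuclideanSpace ℂ (Fin n) →L[ℂ] EuclideanSpace ℂ (Fin n)))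
    {k : ℕ} (μs : Fin k → Fin (N + 1)) :
    trajComp E μs = (List.ofFn fun i => E (μs i)).reverse.prod :=
  (List.foldl_mul_left_eq_prod_reverse_mul _ 1).trans (mul_one _)

theorem trajComp_cons
    (E : Fin (N + 1) → (EuclideanSpace ℂ (Fin n) →L[ℂ] EuclideanSpace ℂ (Fin n)))
    {k : ℕ} (ν : Fin (N + 1)) (μs : Fin k → Fin (N + 1)) :
    trajComp E (Fin.cons ν μs) = trajComp E μs * E ν := by
  simp [trajComp_eq_prod_reverse, List.ofFn_succ]

theorem sum_smul_pow_eq_sum_trajComp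
    (E : Fin (N + 1) → (EuclideanSpace ℂ (Fin n) →L[ℂ] EuclideanSpace ℂ (Fin n)))
    (c : Fin (N + 1) → ℂ) (k : ℕ) :
    (∑ μ, c μ • E μ) ^ k = ∑ μs : Fin k → Fin (N + 1), (∏ i, c (μs i)) • trajComp E μs := by
  induction k with
  | zero => simp [trajComp_eq_prod_reverse]
  | succ k ih =>
    rw [← (Fin.consEquiv fun _ => Fin (N + 1)).sum_comp, Fintype.sum_prod_type, Finset.sum_comm,
      pow_succ, ih, Finset.sum_mul]
    refine Finset.sum_congr rfl fun μs _ => ?_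
    simp only [Finset.mul_sum, smul_mul_smul_comm]
    refine Finset.sum_congr rfl fun ν _ => ?_
    simp [Fin.consEquiv, trajComp_cons, Fin.prod_univ_succ, mul_comm]

theorem hasSum_exp_smul_sub_one {𝔸 : Type*} [NormedRing 𝔸] [NormedAlgebra ℂ 𝔸] [CompleteSpace 𝔸]
    (c : ℂ) (a : 𝔸) :
    HasSum (fun k : ℕ => (Complex.exp (-c) * c ^ k / k !) • a ^ k) (exp (c • (a - 1))) := by
  let : NormedAlgebra ℚ 𝔸 := .restrictScalars ℚ ℂ 𝔸
  have hsplit : c • (a - 1) = c • a + algebraMap ℂ 𝔸 (-c) := by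
    rw [smul_sub, Algebra.algebraMap_eq_smul_one, neg_smul, sub_eq_add_neg]
  have hexp : exp (c • (a - 1)) = Complex.exp (-c) • exp (c • a) := by
    rw [hsplit, exp_add_of_commute (Algebra.commute_algebraMap_right _ _), ← algebraMap_exp_comm,
      ← Algebra.commutes, ← Algebra.smul_def, Complex.exp_eq_exp_ℂ]
  rw [hexp]
  convert (exp_series_hasSum_exp' (𝕂 := ℂ) (c • a)).const_smul (Complex.exp (-c)) using 2 with k
  rw [smul_pow, smul_smul, smul_smul]
  congr 1
  ring

theorem hasSum_pow_mul_exp_neg_div_factorial (x : ℝ) :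
    HasSum (fun k : ℕ => x ^ k * Real.exp (-x) / k !) 1 := by
  have := (expSeries_div_hasSum_exp x).mul_left (Real.exp (-x))
  rw [← Real.exp_eq_exp_ℝ, ← Real.exp_add, neg_add_cancel, Real.exp_zero] at this
  have hterm : ∀ k : ℕ, x ^ k * Real.exp (-x) / k ! = Real.exp (-x) * (x ^ k / k !) :=
    fun k => by ring
  simpa only [hterm] using this

/-- Poisson trajectory decomposition: for `L = γ(Σ_μ p_μ E_μ − I)`,
`exp(Lt) = Σ_k Σ_{μ₁…μ_k} [(γt)^k e^{-γt}/k!] p_{μ₁}⋯p_{μ_k} E_{μ_k}∘⋯∘E_{μ₁}`,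
the coefficients are nonnegative, and they sum to 1. -/
theorem poisson_trajectory_decomposition
    (E : Fin (N + 1) → (EuclideanSpace ℂ (Fin n) →L[ℂ] EuclideanSpace ℂ (Fin n)))
    (p : Fin (N + 1) → ℝ) (hp : ∀ μ, 0 ≤ p μ) (hsum : ∑ μ, p μ = 1)
    (γ t : ℝ) (hγ : 0 < γ) (ht : 0 ≤ t) :
    (NormedSpace.exp ((t : ℂ) • ((γ : ℂ) • ((∑ μ, (p μ : ℂ) • E μ) - 1)))
      = ∑' k : ℕ, ∑ μs : Fin k → Fin (N + 1),
          ((((γ * t) ^ k * Real.exp (-(γ * t)) / (Nat.factorial k : ℝ))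
            * ∏ i, p (μs i) : ℝ) : ℂ) • trajComp E μs) ∧
    (∀ (k : ℕ) (μs : Fin k → Fin (N + 1)),
      0 ≤ ((γ * t) ^ k * Real.exp (-(γ * t)) / (Nat.factorial k : ℝ)) * ∏ i, p (μs i)) ∧
    (∑' k : ℕ, ∑ μs : Fin k → Fin (N + 1),
      ((γ * t) ^ k * Real.exp (-(γ * t)) / (Nat.factorial k : ℝ)) * ∏ i, p (μs i)) = 1 := by
  refine ⟨?_, fun k μs => mul_nonneg (by positivity) (Finset.prod_nonneg fun i _ => hp _), ?_⟩
  · have hgen : (t : ℂ) • (γ : ℂ) • ((∑ μ, (p μ : ℂ) • E μ) - 1)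
        = ((γ * t : ℝ) : ℂ) • ((∑ μ, (p μ : ℂ) • E μ) - 1) := by
      rw [smul_smul, Complex.ofReal_mul, mul_comm]
    rw [hgen, ← (hasSum_exp_smul_sub_one _ _).tsum_eq]
    refine tsum_congr fun k => ?_
    rw [sum_smul_pow_eq_sum_trajComp, Finset.smul_sum]
    refine Finset.sum_congr rfl fun μs _ => ?_
    rw [smul_smul]
    push_cast
    ring_nf
  · have htraj : ∀ k : ℕ, ∑ μs : Fin k → Fin (N + 1), ∏ i, p (μs i) = 1 := fun k => by
      rw [← Fintype.sum_pow, hsum, one_pow]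
    simp_rw [← Finset.mul_sum, htraj, mul_one]
    exact (hasSum_pow_mul_exp_neg_div_factorial _).tsum_eq
end
end
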